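/- Let φ be a real-valued harmonic function on an open subset Ω of ℂ and h > 0. Then for every smooth compactly supported complex-valued function u on Ω, one has the identity ‖e^{-φ/h} ∂̄(e^{φ/h} u)‖²_{L²} = (1/4)( ‖∂_x u + (i ∂_y φ / h) u‖²_{L²} + ‖i ∂_y u + (∂_x φ / h) u‖²_{L²} ), where ∂̄ = (∂_x + i∂_y)/2. -/

import Mathlib

/-- `u : ℂ → ℝ` is harmonic on `s`: `∂²u/∂x² + ∂²u/∂y² = 0` on `s`. -/
def HarmonicOnSet (u : ℂ → ℝ) (s : Set ℂ) : Prop :=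
  ∀ z ∈ s,
    fderiv ℝ (fun w => fderiv ℝ u w 1) z 1
      + fderiv ℝ (fun w => fderiv ℝ u w Complex.I) z Complex.I = 0

/-- `∂̄F = (∂_x F + i ∂_y F)/2` for `F : ℂ → ℂ`. -/
noncomputable def dbarOp (F : ℂ → ℂ) : ℂ → ℂ :=
  fun z => (fderiv ℝ F z 1 + Complex.I * fderiv ℝ F z Complex.I) / 2

open MeasureTheory Complex

noncomputable def Bim : ℂ →L[ℝ] ℂ →L[ℝ] ℝ :=
  LinearMap.mkContinuous₂
    (LinearMap.mk₂ ℝ (fun a b => (a * (starRingEnd ℂ) b).im)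
      (fun a a' b => by simp [add_mul])
      (fun r a b => by simp [Complex.real_smul, Complex.mul_im]; ring)
      (fun a b b' => by simp [mul_add])
      (fun r a b => by simp [Complex.real_smul, Complex.mul_im, Complex.mul_re]; ring))
    1 (fun a b => by
      simp only [LinearMap.mk₂_apply, Real.norm_eq_abs, one_mul]
      calc |(a * (starRingEnd ℂ) b).im| ≤ ‖a * (starRingEnd ℂ) b‖ :=
            Complex.abs_im_le_norm _
        _ = ‖a‖ * ‖b‖ := by simp [map_mul, Complex.norm_conj])

@[simp] lemma Bim_apply (a b : ℂ) : Bim a b = (a * (starRingEnd ℂ) b).im := rfl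

lemma Bim_antisymm (a b : ℂ) : Bim a b = - Bim b a := by
  simp [Bim_apply, Complex.mul_im, Complex.conj_re, Complex.conj_im]; ring

lemma norm_add_sq_complex (x y : ℂ) :
    ‖x + y‖^2 = ‖x‖^2 + ‖y‖^2 + 2*(x * (starRingEnd ℂ) y).re := by
  rw [Complex.sq_norm,
    Complex.sq_norm, Complex.sq_norm]
  simp only [Complex.normSq_apply, Complex.add_re, Complex.add_im, Complex.mul_re, Complex.mul_im,
    Complex.conj_re, Complex.conj_im]
  ring

lemma wtop1 : (1 : WithTop ℕ∞) + 1 ≤ ((⊤:ℕ∞) : WithTop ℕ∞) := by norm_cast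
lemma wtop0 : ((⊤:ℕ∞) : WithTop ℕ∞) ≠ 0 := by simp

lemma contDiff_fderiv1 {F : Type*} [NormedAddCommGroup F] [NormedSpace ℝ F]
    (f : ℂ → F) (hf : ContDiff ℝ (⊤:ℕ∞) f) : ContDiff ℝ 1 (fderiv ℝ f) :=
  hf.fderiv_right wtop1

lemma fderiv_apply_swap {F : Type*} [NormedAddCommGroup F] [NormedSpace ℝ F]
    (f : ℂ → F) (hf : ContDiff ℝ (⊤:ℕ∞) f) (z a b : ℂ) :
    fderiv ℝ (fun w => fderiv ℝ f w a) z b = fderiv ℝ (fderiv ℝ f) z b a := by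
  rw [fderiv_clm_apply ((contDiff_fderiv1 f hf).differentiable one_ne_zero z)
    (differentiableAt_const a)]
  simp

lemma snd_deriv_symm {F : Type*} [NormedAddCommGroup F] [NormedSpace ℝ F]
    (f : ℂ → F) (hf : ContDiff ℝ (⊤:ℕ∞) f) (z a b : ℂ) :
    fderiv ℝ (fderiv ℝ f) z a b = fderiv ℝ (fderiv ℝ f) z b a :=
  second_derivative_symmetric (fun y => (hf.differentiable wtop0 y).hasFDerivAt)
    ((contDiff_fderiv1 f hf).differentiable one_ne_zero z).hasFDerivAt a b

variable {u : ℂ → ℂ}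

lemma cont_fderiv_apply {F : Type*} [NormedAddCommGroup F] [NormedSpace ℝ F]
    (f : ℂ → F) (hf : ContDiff ℝ (⊤:ℕ∞) f) (v : ℂ) :
    Continuous (fun z => fderiv ℝ f z v) :=
  (ContinuousLinearMap.apply ℝ F v).continuous.comp (contDiff_fderiv1 f hf).continuous

lemma hcs_fderiv_apply {F : Type*} [NormedAddCommGroup F] [NormedSpace ℝ F]
    {f : ℂ → F} (hf : HasCompactSupport f) (v : ℂ) :
    HasCompactSupport (fun z => fderiv ℝ f z v) := by
  have := (hf.fderiv ℝ).comp_left (g := fun (L : ℂ →L[ℝ] F) => L v) (by simp)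
  exact this

lemma integrable_im_mul_conj (f g : ℂ → ℂ) (hf : Continuous f) (hg : Continuous g)
    (hgs : HasCompactSupport (fun z => f z * (starRingEnd ℂ) (g z))) :
    Integrable (fun z => (f z * (starRingEnd ℂ) (g z)).im) volume := by
  apply Continuous.integrable_of_hasCompactSupport
    (Complex.continuous_im.comp (hf.mul (Complex.continuous_conj.comp hg)))
  have := hgs.comp_left (g := Complex.im) Complex.zero_im
  exact this

lemma hcs_conj {g : ℂ → ℂ} (hgs : HasCompactSupport g) :
    HasCompactSupport (fun z => (starRingEnd ℂ) (g z)) := by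
  have := hgs.comp_left (g := (starRingEnd ℂ)) (map_zero _)
  exact this

lemma cross1 (hu : ContDiff ℝ (⊤:ℕ∞) u) (hsupp : HasCompactSupport u) :
    ∫ z : ℂ, ((fderiv ℝ u z 1) * (starRingEnd ℂ) (fderiv ℝ u z Complex.I)).im = 0 := by
  set U₁ : ℂ → ℂ := fun z => fderiv ℝ u z 1 with hU₁def
  set U₂ : ℂ → ℂ := fun z => fderiv ℝ u z Complex.I with hU₂def
  have hU₁ : ContDiff ℝ 1 U₁ := (contDiff_fderiv1 u hu).clm_apply contDiff_const
  have hU₂ : ContDiff ℝ 1 U₂ := (contDiff_fderiv1 u hu).clm_apply contDiff_const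
  have hcU₁ : Continuous U₁ := cont_fderiv_apply u hu 1
  have hcU₂ : Continuous U₂ := cont_fderiv_apply u hu Complex.I
  have hsU₁ : HasCompactSupport U₁ := hcs_fderiv_apply hsupp 1
  have hsU₂ : HasCompactSupport U₂ := hcs_fderiv_apply hsupp Complex.I
  have hcu : Continuous u := hu.continuous
  have hU₁' : ContDiff ℝ (⊤:ℕ∞) U₁ := (hu.fderiv_right (le_refl _)).clm_apply contDiff_const
  have hU₂' : ContDiff ℝ (⊤:ℕ∞) U₂ := (hu.fderiv_right (le_refl _)).clm_apply contDiff_const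
  have hcdU₁ : Continuous (fun z => fderiv ℝ U₁ z Complex.I) := cont_fderiv_apply U₁ hU₁' Complex.I
  have hcdU₂ : Continuous (fun z => fderiv ℝ U₂ z 1) := cont_fderiv_apply U₂ hU₂' 1
  have key : ∀ z, fderiv ℝ U₁ z Complex.I = fderiv ℝ U₂ z 1 := by
    intro z
    rw [hU₁def, hU₂def, fderiv_apply_swap u hu, fderiv_apply_swap u hu, snd_deriv_symm u hu]
  have int1 : Integrable (fun z => ((fderiv ℝ U₁ z Complex.I) * (starRingEnd ℂ) (u z)).im) volume :=
    integrable_im_mul_conj _ _ hcdU₁ hcu (hcs_conj hsupp).mul_left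
  have int2 : Integrable (fun z => (U₁ z * (starRingEnd ℂ) (fderiv ℝ u z Complex.I)).im) volume :=
    integrable_im_mul_conj _ _ hcU₁ hcU₂ (hcs_conj hsU₂).mul_left
  have int3 : Integrable (fun z => (U₁ z * (starRingEnd ℂ) (u z)).im) volume :=
    integrable_im_mul_conj _ _ hcU₁ hcu (hcs_conj hsupp).mul_left
  have eq1 := integral_bilinear_fderiv_right_eq_neg_left_of_integrable (μ := volume)
    (f := U₁) (g := u) (v := Complex.I) (B := Bim)
    (by simpa only [Bim_apply] using int1)
    (by simpa only [Bim_apply] using int2)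
    (by simpa only [Bim_apply] using int3)
    (fun x _ => hU₁.differentiable one_ne_zero x) (fun x _ => hu.differentiable wtop0 x)
  have int1' : Integrable (fun z => (u z * (starRingEnd ℂ) (fderiv ℝ U₂ z 1)).im) volume :=
    integrable_im_mul_conj _ _ hcu hcdU₂ hsupp.mul_right
  have int2' : Integrable (fun z => (U₁ z * (starRingEnd ℂ) (U₂ z)).im) volume :=
    integrable_im_mul_conj _ _ hcU₁ hcU₂ (hcs_conj hsU₂).mul_left
  have int3' : Integrable (fun z => (u z * (starRingEnd ℂ) (U₂ z)).im) volume :=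
    integrable_im_mul_conj _ _ hcu hcU₂ (hcs_conj hsU₂).mul_left
  have eq2 := integral_bilinear_fderiv_right_eq_neg_left_of_integrable (μ := volume)
    (f := U₂) (g := u) (v := 1) (B := Bim.flip)
    (by simpa only [ContinuousLinearMap.flip_apply, Bim_apply] using int1')
    (by simpa only [ContinuousLinearMap.flip_apply, Bim_apply] using int2')
    (by simpa only [ContinuousLinearMap.flip_apply, Bim_apply] using int3')
    (fun x _ => hU₂.differentiable one_ne_zero x) (fun x _ => hu.differentiable wtop0 x)
  simp only [ContinuousLinearMap.flip_apply, Bim_apply] at eq1 eq2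
  -- eq1 : ∫ (U₁ z * conj (fderiv u z I)).im = - ∫ ((fderiv U₁ z I) * conj (u z)).im
  -- eq2 : ∫ ((fderiv u z 1) * conj (U₂ z)).im = - ∫ ((u z) * conj (fderiv U₂ z 1)).im
  have hswap : ∀ x y : ℂ, (x * (starRingEnd ℂ) y).im = -(y * (starRingEnd ℂ) x).im := by
    intro x y; simp [Complex.mul_im]; ring
  have e3 : (∫ z : ℂ, (U₁ z * (starRingEnd ℂ) (U₂ z)).im)
      = ∫ z : ℂ, ((fderiv ℝ U₂ z 1) * (starRingEnd ℂ) (u z)).im := by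
    rw [show (∫ z : ℂ, (U₁ z * (starRingEnd ℂ) (U₂ z)).im)
        = ∫ z : ℂ, ((fderiv ℝ u z 1) * (starRingEnd ℂ) (U₂ z)).im from rfl, eq2,
      ← integral_neg]
    congr 1; funext z; rw [hswap (u z) ((fderiv ℝ U₂ z) 1), neg_neg]
  have e4 : (∫ z : ℂ, (U₁ z * (starRingEnd ℂ) (U₂ z)).im)
      = - ∫ z : ℂ, ((fderiv ℝ U₂ z 1) * (starRingEnd ℂ) (u z)).im := by
    rw [show (∫ z : ℂ, (U₁ z * (starRingEnd ℂ) (U₂ z)).im)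
        = ∫ z : ℂ, (U₁ z * (starRingEnd ℂ) (fderiv ℝ u z Complex.I)).im from rfl, eq1]
    congr 1; apply integral_congr_ae; filter_upwards with z; rw [key]
  have : (∫ z : ℂ, (U₁ z * (starRingEnd ℂ) (U₂ z)).im) = 0 := by linarith
  exact this

lemma norm_sq_fderiv (hu : ContDiff ℝ (⊤:ℕ∞) u) (z v : ℂ) :
    HasFDerivAt (fun w => ‖u w‖^2)
      (2 • ((innerSL ℝ) (u z)).comp (fderiv ℝ u z)) z :=
  ((hu.differentiable wtop0 z).hasFDerivAt).norm_sq

lemma norm_sq_fderiv_apply (hu : ContDiff ℝ (⊤:ℕ∞) u) (z v : ℂ) :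
    fderiv ℝ (fun w => ‖u w‖^2) z v = 2 * ((fderiv ℝ u z v) * (starRingEnd ℂ) (u z)).re := by
  rw [(norm_sq_fderiv hu z v).fderiv]
  simp [RCLike.inner_apply, Complex.mul_re, Complex.conj_re, Complex.conj_im]
  ring

lemma cross2 (ψ : ℂ → ℝ) (hψ : ContDiff ℝ (⊤:ℕ∞) ψ)
    (hu : ContDiff ℝ (⊤:ℕ∞) u) (hsupp : HasCompactSupport u)
    (hΔ : ∀ z, (fderiv ℝ (fun w => fderiv ℝ ψ w 1) z 1
        + fderiv ℝ (fun w => fderiv ℝ ψ w Complex.I) z Complex.I) * ‖u z‖^2 = 0) :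
    ∫ z : ℂ, (fderiv ℝ ψ z 1 * ((fderiv ℝ u z 1) * (starRingEnd ℂ) (u z)).re
      + fderiv ℝ ψ z Complex.I * ((fderiv ℝ u z Complex.I) * (starRingEnd ℂ) (u z)).re) = 0 := by
  have hcu : Continuous u := hu.continuous
  set g : ℂ → ℝ := fun w => ‖u w‖^2 with hgdef
  have hgc : Continuous g := (hcu.norm).pow 2
  have hgcs : HasCompactSupport g := by
    have := hsupp.comp_left (g := fun w : ℂ => ‖w‖^2) (by simp)
    exact this
  have hgdiff : Differentiable ℝ g := fun z => (norm_sq_fderiv hu z 0).differentiableAt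
  have hgfd : ∀ v z, fderiv ℝ g z v = 2 * ((fderiv ℝ u z v) * (starRingEnd ℂ) (u z)).re :=
    fun v z => norm_sq_fderiv_apply hu z v
  have hfdgc : ∀ v, Continuous (fun z => fderiv ℝ g z v) := by
    intro v
    have : (fun z => fderiv ℝ g z v) = fun z => 2 * ((fderiv ℝ u z v) * (starRingEnd ℂ) (u z)).re :=
      funext (hgfd v)
    rw [this]
    exact (continuous_const.mul (Complex.continuous_re.comp
      ((cont_fderiv_apply u hu v).mul (Complex.continuous_conj.comp hcu))))
  have hfdgcs : ∀ v : ℂ, HasCompactSupport (fun z => fderiv ℝ g z v) := fun v =>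
    hcs_fderiv_apply hgcs v
  set F₁ : ℂ → ℝ := fun z => fderiv ℝ ψ z 1 with hF₁def
  set F₂ : ℂ → ℝ := fun z => fderiv ℝ ψ z Complex.I with hF₂def
  have hF₁' : ContDiff ℝ (⊤:ℕ∞) F₁ := (hψ.fderiv_right (le_refl _)).clm_apply contDiff_const
  have hF₂' : ContDiff ℝ (⊤:ℕ∞) F₂ := (hψ.fderiv_right (le_refl _)).clm_apply contDiff_const
  have hcF₁ : Continuous F₁ := cont_fderiv_apply ψ hψ 1
  have hcF₂ : Continuous F₂ := cont_fderiv_apply ψ hψ Complex.I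
  have ibp1 := integral_mul_fderiv_eq_neg_fderiv_mul_of_integrable (μ := volume)
    (f := F₁) (g := g) (v := 1)
    (((cont_fderiv_apply F₁ hF₁' 1).mul hgc).integrable_of_hasCompactSupport hgcs.mul_left)
    ((hcF₁.mul (hfdgc 1)).integrable_of_hasCompactSupport (hfdgcs 1).mul_left)
    ((hcF₁.mul hgc).integrable_of_hasCompactSupport hgcs.mul_left)
    (fun x _ => hF₁'.differentiable wtop0 x) (fun x _ => hgdiff x)
  have ibp2 := integral_mul_fderiv_eq_neg_fderiv_mul_of_integrable (μ := volume)
    (f := F₂) (g := g) (v := Complex.I)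
    (((cont_fderiv_apply F₂ hF₂' Complex.I).mul hgc).integrable_of_hasCompactSupport hgcs.mul_left)
    ((hcF₂.mul (hfdgc Complex.I)).integrable_of_hasCompactSupport (hfdgcs Complex.I).mul_left)
    ((hcF₂.mul hgc).integrable_of_hasCompactSupport hgcs.mul_left)
    (fun x _ => hF₂'.differentiable wtop0 x) (fun x _ => hgdiff x)
  have hpt : ∀ z, (F₁ z * ((fderiv ℝ u z 1) * (starRingEnd ℂ) (u z)).re
      + F₂ z * ((fderiv ℝ u z Complex.I) * (starRingEnd ℂ) (u z)).re)
      = 2⁻¹ * (F₁ z * fderiv ℝ g z 1) + 2⁻¹ * (F₂ z * fderiv ℝ g z Complex.I) := by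
    intro z; rw [hgfd 1 z, hgfd Complex.I z]; ring
  rw [integral_congr_ae (Filter.Eventually.of_forall hpt)]
  rw [integral_add (f := fun a => 2⁻¹ * (F₁ a * fderiv ℝ g a 1))
    (g := fun a => 2⁻¹ * (F₂ a * fderiv ℝ g a Complex.I))
    (((hcF₁.mul (hfdgc 1)).integrable_of_hasCompactSupport (hfdgcs 1).mul_left).const_mul _)
    (((hcF₂.mul (hfdgc Complex.I)).integrable_of_hasCompactSupport
      (hfdgcs Complex.I).mul_left).const_mul _),
    integral_const_mul, integral_const_mul, ibp1, ibp2]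
  have hint1 : Integrable (fun a : ℂ => -(2⁻¹ * ((fderiv ℝ F₁ a) 1 * g a))) volume :=
    ((((cont_fderiv_apply F₁ hF₁' 1).mul hgc).integrable_of_hasCompactSupport
      hgcs.mul_left).const_mul _).neg
  have hint2 : Integrable (fun a : ℂ => -(2⁻¹ * ((fderiv ℝ F₂ a) Complex.I * g a))) volume :=
    ((((cont_fderiv_apply F₂ hF₂' Complex.I).mul hgc).integrable_of_hasCompactSupport
      hgcs.mul_left).const_mul _).neg
  rw [mul_neg 2⁻¹ (∫ (x : ℂ), (fderiv ℝ F₁ x) 1 * g x), mul_neg, ← integral_const_mul 2⁻¹,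
    ← integral_const_mul 2⁻¹, ← integral_neg, ← integral_neg, ← integral_add hint1 hint2,
    show (0:ℝ) = ∫ _z : ℂ, (0:ℝ) from (integral_zero _ _).symm]
  apply integral_congr_ae
  filter_upwards with z
  have h0 := hΔ z
  simp only [hgdef]
  nlinarith [h0]

lemma cross_total (ψ : ℂ → ℝ) (hψ : ContDiff ℝ (⊤:ℕ∞) ψ)
    (hu : ContDiff ℝ (⊤:ℕ∞) u) (hsupp : HasCompactSupport u)
    (hΔ : ∀ z, (fderiv ℝ (fun w => fderiv ℝ ψ w 1) z 1
        + fderiv ℝ (fun w => fderiv ℝ ψ w Complex.I) z Complex.I) * ‖u z‖^2 = 0) :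
    ∫ z : ℂ, ((fderiv ℝ u z 1 + (Complex.I * ((fderiv ℝ ψ z Complex.I : ℝ) : ℂ)) * u z) *
      (starRingEnd ℂ) (Complex.I * fderiv ℝ u z Complex.I
        + ((fderiv ℝ ψ z 1 : ℝ) : ℂ) * u z)).re = 0 := by
  have hcu : Continuous u := hu.continuous
  have hpt : ∀ z : ℂ, ((fderiv ℝ u z 1 + (Complex.I * ((fderiv ℝ ψ z Complex.I : ℝ) : ℂ)) * u z) *
      (starRingEnd ℂ) (Complex.I * fderiv ℝ u z Complex.I
        + ((fderiv ℝ ψ z 1 : ℝ) : ℂ) * u z)).re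
      = ((fderiv ℝ u z 1) * (starRingEnd ℂ) (fderiv ℝ u z Complex.I)).im
        + (fderiv ℝ ψ z 1 * ((fderiv ℝ u z 1) * (starRingEnd ℂ) (u z)).re
          + fderiv ℝ ψ z Complex.I * ((fderiv ℝ u z Complex.I) * (starRingEnd ℂ) (u z)).re) := by
    intro z
    simp only [Complex.mul_re, Complex.mul_im, Complex.add_re, Complex.add_im, Complex.conj_re,
      Complex.conj_im, Complex.I_re, Complex.I_im, Complex.ofReal_re, Complex.ofReal_im]
    ring
  have hcsw : HasCompactSupport (fun z => (starRingEnd ℂ) (u z)) := hcs_conj hsupp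
  have hint1 : Integrable
      (fun z => ((fderiv ℝ u z 1) * (starRingEnd ℂ) (fderiv ℝ u z Complex.I)).im) volume :=
    integrable_im_mul_conj _ _ (cont_fderiv_apply u hu 1) (cont_fderiv_apply u hu Complex.I)
      (hcs_conj (hcs_fderiv_apply hsupp Complex.I)).mul_left
  have hre : ∀ v : ℂ, HasCompactSupport (fun z => ((fderiv ℝ u z v) * (starRingEnd ℂ) (u z)).re) := by
    intro v
    have := (hcsw.mul_left (f := fun z => fderiv ℝ u z v)).comp_left (g := Complex.re)
      Complex.zero_re
    exact this
  have hrec : ∀ v : ℂ, Continuous (fun z => ((fderiv ℝ u z v) * (starRingEnd ℂ) (u z)).re) :=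
    fun v => Complex.continuous_re.comp
      ((cont_fderiv_apply u hu v).mul (Complex.continuous_conj.comp hcu))
  have hint2 : Integrable (fun z => fderiv ℝ ψ z 1 * ((fderiv ℝ u z 1) * (starRingEnd ℂ) (u z)).re
      + fderiv ℝ ψ z Complex.I * ((fderiv ℝ u z Complex.I) * (starRingEnd ℂ) (u z)).re) volume := by
    apply Integrable.add
    · exact ((cont_fderiv_apply ψ hψ 1).mul (hrec 1)).integrable_of_hasCompactSupport
        (hre 1).mul_left
    · exact ((cont_fderiv_apply ψ hψ Complex.I).mul
        (hrec Complex.I)).integrable_of_hasCompactSupport (hre Complex.I).mul_left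
  rw [integral_congr_ae (Filter.Eventually.of_forall hpt), integral_add hint1 hint2,
    cross1 hu hsupp, cross2 ψ hψ hu hsupp hΔ, add_zero]

lemma dbar_expand (ψ : ℂ → ℝ) (u : ℂ → ℂ) (z : ℂ)
    (hψ : DifferentiableAt ℝ ψ z) (hud : DifferentiableAt ℝ u z) :
    dbarOp (fun w => Real.exp (ψ w) • u w) z
      = Real.exp (ψ z) • (((fderiv ℝ u z 1 + (Complex.I * ((fderiv ℝ ψ z Complex.I : ℝ):ℂ)) * u z)
        + (Complex.I * fderiv ℝ u z Complex.I + ((fderiv ℝ ψ z 1 : ℝ):ℂ) * u z)) / 2) := by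
  have h1 : HasFDerivAt (fun w => Real.exp (ψ w)) (Real.exp (ψ z) • fderiv ℝ ψ z) z :=
    hψ.hasFDerivAt.exp
  have h2 := (h1.smul hud.hasFDerivAt).fderiv
  unfold dbarOp
  rw [show (fun w => Real.exp (ψ w) • u w) = (fun w => Real.exp (ψ w)) • u from rfl, h2]
  simp only [ContinuousLinearMap.add_apply, ContinuousLinearMap.smul_apply,
    ContinuousLinearMap.smulRight_apply, Complex.real_smul, smul_eq_mul, Complex.ofReal_mul]
  ring


lemma norm_half_sq (x y : ℂ) :
    ‖(x+y)/2‖^2 = (1/4)*‖x‖^2 + ((1/4)*‖y‖^2 + 2⁻¹*(x * (starRingEnd ℂ) y).re) := by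
  rw [norm_div, div_pow, norm_add_sq_complex, show ‖(2:ℂ)‖ = 2 by norm_num]
  ring

lemma fderiv_div_const' {f : ℂ → ℝ} {z : ℂ} (hf : DifferentiableAt ℝ f z) (c : ℝ) :
    fderiv ℝ (fun w => f w / c) z = c⁻¹ • fderiv ℝ f z := by
  simp_rw [div_eq_inv_mul]
  exact (hf.hasFDerivAt.const_mul c⁻¹).fderiv

/-- For a real-valued harmonic `φ` on an open `Ω ⊆ ℂ`, `h > 0` and any smooth
compactly supported `u : Ω → ℂ`:
`‖e^{-φ/h} ∂̄(e^{φ/h} u)‖² = (1/4)(‖∂_x u + (i ∂_y φ/h) u‖² + ‖i ∂_y u + (∂_x φ/h) u‖²)`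
in `L²(ℂ)`. -/
theorem dbar_conjugated_norm_identity
    {Ω : Set ℂ} (hΩ : IsOpen Ω) (φ : ℂ → ℝ)
    (hφ : ContDiffOn ℝ (⊤ : ℕ∞) φ Ω) (hharm : HarmonicOnSet φ Ω)
    (h : ℝ) (hh : 0 < h)
    (u : ℂ → ℂ) (hu : ContDiff ℝ (⊤ : ℕ∞) u) (hsupp : HasCompactSupport u)
    (hsub : tsupport u ⊆ Ω) :
    ∫ z : ℂ, ‖Real.exp (-(φ z)/h) • dbarOp (fun w => Real.exp (φ w / h) • u w) z‖ ^ 2 =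
      (1/4) * ((∫ z : ℂ, ‖fderiv ℝ u z 1 + (Complex.I * (fderiv ℝ φ z Complex.I : ℂ) / (h:ℂ)) * u z‖ ^ 2)
        + ∫ z : ℂ, ‖Complex.I * fderiv ℝ u z Complex.I + ((fderiv ℝ φ z 1 : ℂ) / (h:ℂ)) * u z‖ ^ 2) := by
  have huS : ContDiff ℝ (⊤:ℕ∞) u := hu.of_le (by simp)
  have hphiS : ContDiffOn ℝ (⊤:ℕ∞) φ Ω := hφ.of_le (by simp)
  have hcu : Continuous u := huS.continuous
  -- cutoff function
  obtain ⟨χ, hχ0, hχ1, -⟩ := exists_contMDiffMap_zero_one_nhds_of_isClosed (modelWithCornersSelf ℝ ℂ)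
    (hΩ.isClosed_compl) (isClosed_tsupport u) (disjoint_compl_left.mono_right hsub)
  have hχ : ContDiff ℝ (⊤:ℕ∞) χ := contMDiff_iff_contDiff.mp χ.contMDiff
  obtain ⟨W, hWopen, hWsub, hW0⟩ := eventually_nhdsSet_iff_exists.mp hχ0
  obtain ⟨V₀, hV₀open, hV₀sub, hV₀1⟩ := eventually_nhdsSet_iff_exists.mp hχ1
  set V : Set ℂ := V₀ ∩ Ω with hVdef
  have hVopen : IsOpen V := hV₀open.inter hΩ
  have hVsub : tsupport u ⊆ V := Set.subset_inter hV₀sub hsub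
  have hVΩ : V ⊆ Ω := Set.inter_subset_right
  set Φ : ℂ → ℝ := fun z => χ z * φ z with hΦdef
  have hΦ : ContDiff ℝ (⊤:ℕ∞) Φ := by
    rw [contDiff_iff_contDiffAt]
    intro z
    by_cases hz : z ∈ Ω
    · exact (hχ.contDiffAt).mul (hphiS.contDiffAt (hΩ.mem_nhds hz))
    · have hzW : z ∈ W := hWsub (by simpa using hz)
      refine (contDiffAt_const (c := (0:ℝ))).congr_of_eventuallyEq ?_
      filter_upwards [hWopen.mem_nhds hzW] with w hw
      simp [hΦdef, hW0 w hw]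
  have hΦφ : Set.EqOn Φ φ V := fun w hw => by simp [hΦdef, hV₀1 w hw.1]
  set ψ : ℂ → ℝ := fun z => Φ z / h with hψdef
  have hψ : ContDiff ℝ (⊤:ℕ∞) ψ := hΦ.div_const h
  have hφdiff : ∀ z ∈ Ω, DifferentiableAt ℝ φ z := fun z hz =>
    (hphiS.contDiffAt (hΩ.mem_nhds hz)).differentiableAt wtop0
  -- derivative of ψ on V
  have hψfd : ∀ z ∈ V, ∀ v : ℂ, fderiv ℝ ψ z v = fderiv ℝ φ z v / h := by
    intro z hz v
    have hev : ψ =ᶠ[nhds z] (fun w => φ w / h) := by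
      filter_upwards [hVopen.mem_nhds hz] with w hw
      simp [hψdef, hΦφ hw]
    rw [hev.fderiv_eq, fderiv_div_const' (hφdiff z (hVΩ hz)) h]
    simp [div_eq_inv_mul]
  --∆ψ · ‖u‖² = 0 everywhere
  have hΔψ : ∀ z, (fderiv ℝ (fun w => fderiv ℝ ψ w 1) z 1
      + fderiv ℝ (fun w => fderiv ℝ ψ w Complex.I) z Complex.I) * ‖u z‖^2 = 0 := by
    intro z
    by_cases hz : z ∈ V
    · have hfd1 : ∀ v : ℂ, fderiv ℝ (fun w => fderiv ℝ ψ w v) z v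
          = fderiv ℝ (fun w => fderiv ℝ φ w v) z v / h := by
        intro v
        have hev : (fun w => fderiv ℝ ψ w v) =ᶠ[nhds z] (fun w => fderiv ℝ φ w v / h) := by
          filter_upwards [hVopen.mem_nhds hz] with w hw
          exact hψfd w hw v
        have hΦev : ∀ w ∈ V, fderiv ℝ φ w v / h = fderiv ℝ Φ w v / h := by
          intro w hw
          have : Φ =ᶠ[nhds w] φ := Filter.eventuallyEq_of_mem (hVopen.mem_nhds hw) hΦφ
          rw [this.fderiv_eq]
        have hev2 : (fun w => fderiv ℝ ψ w v) =ᶠ[nhds z] (fun w => fderiv ℝ Φ w v / h) := by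
          filter_upwards [hVopen.mem_nhds hz] with w hw
          rw [hψfd w hw v, hΦev w hw]
        have hΦdiffapp : DifferentiableAt ℝ (fun w => fderiv ℝ Φ w v) z :=
          ((contDiff_fderiv1 Φ hΦ).clm_apply contDiff_const).differentiable one_ne_zero z
        rw [hev2.fderiv_eq, fderiv_div_const' hΦdiffapp h]
        have hev3 : (fun w => fderiv ℝ Φ w v) =ᶠ[nhds z] (fun w => fderiv ℝ φ w v) := by
          filter_upwards [hVopen.mem_nhds hz] with w hw
          have : Φ =ᶠ[nhds w] φ := Filter.eventuallyEq_of_mem (hVopen.mem_nhds hw) hΦφ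
          rw [this.fderiv_eq]
        rw [hev3.fderiv_eq]
        simp [div_eq_inv_mul]
      rw [hfd1 1, hfd1 Complex.I, ← add_div]
      rw [hharm z (hVΩ hz)]
      simp
    · have hz' : z ∉ tsupport u := fun hzt => hz (hVsub hzt)
      simp [image_eq_zero_of_notMem_tsupport hz']
  -- the two fields A and B
  set A : ℂ → ℂ := fun z => fderiv ℝ u z 1
    + (Complex.I * ((fderiv ℝ ψ z Complex.I : ℝ) : ℂ)) * u z with hAdef
  set B : ℂ → ℂ := fun z => Complex.I * fderiv ℝ u z Complex.I
    + ((fderiv ℝ ψ z 1 : ℝ) : ℂ) * u z with hBdef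
  have husupp_ev : ∀ z, z ∉ tsupport u → (u =ᶠ[nhds z] fun _ => 0) := by
    intro z hz
    filter_upwards [(isClosed_tsupport u).isOpen_compl.mem_nhds hz] with w hw
    exact image_eq_zero_of_notMem_tsupport hw
  -- pointwise identity for the left-hand side integrand
  have hLHS : ∀ z : ℂ, ‖Real.exp (-(φ z)/h) • dbarOp (fun w => Real.exp (φ w / h) • u w) z‖ ^ 2
      = ‖(A z + B z)/2‖^2 := by
    intro z
    by_cases hz : z ∈ V
    · have hev : (fun w => Real.exp (φ w / h) • u w) =ᶠ[nhds z]
          (fun w => Real.exp (ψ w) • u w) := by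
        filter_upwards [hVopen.mem_nhds hz] with w hw
        rw [hψdef]; simp only [hΦφ hw]
      have hdb : dbarOp (fun w => Real.exp (φ w / h) • u w) z
          = dbarOp (fun w => Real.exp (ψ w) • u w) z := by
        unfold dbarOp; rw [hev.fderiv_eq]
      rw [hdb, dbar_expand ψ u z (hψ.differentiable wtop0 z) (huS.differentiable wtop0 z),
        smul_smul, show Real.exp (-(φ z)/h) * Real.exp (ψ z) = 1 by
          rw [hψdef]; simp only [hΦφ hz]
          rw [← Real.exp_add, neg_div, neg_add_cancel, Real.exp_zero], one_smul]
    · have hz' : z ∉ tsupport u := fun hzt => hz (hVsub hzt)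
      have hu0 : u z = 0 := image_eq_zero_of_notMem_tsupport hz'
      have hev0 := husupp_ev z hz'
      have hfu0 : fderiv ℝ u z = 0 := by
        rw [hev0.fderiv_eq]; exact fderiv_const_apply 0
      have hev0' : (fun w => Real.exp (φ w / h) • u w) =ᶠ[nhds z] (fun _ => (0:ℂ)) := by
        filter_upwards [hev0] with w hw; rw [hw, smul_zero]
      have hdb0 : dbarOp (fun w => Real.exp (φ w / h) • u w) z = 0 := by
        unfold dbarOp
        rw [hev0'.fderiv_eq, fderiv_const_apply 0]
        simp
      rw [hdb0, smul_zero, hAdef, hBdef]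
      simp [hu0, hfu0]
  have hR1 : ∀ z : ℂ, ‖fderiv ℝ u z 1 + (Complex.I * (fderiv ℝ φ z Complex.I : ℂ) / (h:ℂ)) * u z‖ ^ 2
      = ‖A z‖^2 := by
    intro z
    by_cases hz : z ∈ V
    · rw [hAdef]
      simp only []
      rw [hψfd z hz Complex.I]
      push_cast
      ring_nf
    · have hu0 : u z = 0 := image_eq_zero_of_notMem_tsupport (fun hzt => hz (hVsub hzt))
      rw [hAdef]; simp [hu0]
  have hR2 : ∀ z : ℂ, ‖Complex.I * fderiv ℝ u z Complex.I + ((fderiv ℝ φ z 1 : ℂ) / (h:ℂ)) * u z‖ ^ 2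
      = ‖B z‖^2 := by
    intro z
    by_cases hz : z ∈ V
    · rw [hBdef]
      simp only []
      rw [hψfd z hz 1]
      push_cast
      ring_nf
    · have hu0 : u z = 0 := image_eq_zero_of_notMem_tsupport (fun hzt => hz (hVsub hzt))
      rw [hBdef]; simp [hu0]
  -- continuity and integrability of A, B
  have hψc : ∀ v : ℂ, Continuous fun z => ((fderiv ℝ ψ z v : ℝ) : ℂ) :=
    fun v => Complex.continuous_ofReal.comp (cont_fderiv_apply ψ hψ v)
  have hAc : Continuous A := by
    rw [hAdef]
    exact (cont_fderiv_apply u huS 1).add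
      (((continuous_const.mul (hψc Complex.I)).mul hcu))
  have hBc : Continuous B := by
    rw [hBdef]
    exact (continuous_const.mul (cont_fderiv_apply u huS Complex.I)).add
      ((hψc 1).mul hcu)
  have hAcs : HasCompactSupport A := by
    rw [hAdef]
    exact (hcs_fderiv_apply hsupp 1).add hsupp.mul_left
  have hBcs : HasCompactSupport B := by
    rw [hBdef]
    apply HasCompactSupport.add
    · have := (hcs_fderiv_apply hsupp Complex.I).mul_left (f := fun _ => Complex.I)
      exact this
    · exact hsupp.mul_left
  have hA2 : Integrable (fun z => ‖A z‖^2) volume := by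
    apply Continuous.integrable_of_hasCompactSupport ((hAc.norm).pow 2)
    have := hAcs.comp_left (g := fun w : ℂ => ‖w‖^2) (by simp)
    exact this
  have hB2 : Integrable (fun z => ‖B z‖^2) volume := by
    apply Continuous.integrable_of_hasCompactSupport ((hBc.norm).pow 2)
    have := hBcs.comp_left (g := fun w : ℂ => ‖w‖^2) (by simp)
    exact this
  have hABre : Integrable (fun z => (A z * (starRingEnd ℂ) (B z)).re) volume := by
    apply Continuous.integrable_of_hasCompactSupport
      (Complex.continuous_re.comp (hAc.mul (Complex.continuous_conj.comp hBc)))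
    have := ((hcs_conj hBcs).mul_left (f := A)).comp_left (g := Complex.re) Complex.zero_re
    simpa only [Function.comp_def] using this
  -- the cross term vanishes
  have hcross0 : ∫ z : ℂ, (A z * (starRingEnd ℂ) (B z)).re = 0 :=
    cross_total ψ hψ huS hsupp hΔψ
  -- assemble
  rw [integral_congr_ae (Filter.Eventually.of_forall hLHS),
    integral_congr_ae (Filter.Eventually.of_forall hR1),
    integral_congr_ae (Filter.Eventually.of_forall hR2)]
  have hpt : ∀ z : ℂ, ‖(A z + B z)/2‖^2
      = (1/4) * ‖A z‖^2 + ((1/4) * ‖B z‖^2 + 2⁻¹ * (A z * (starRingEnd ℂ) (B z)).re) :=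
    fun z => norm_half_sq (A z) (B z)
  have hsum2 : Integrable (fun z : ℂ => (1/4) * ‖B z‖^2
      + 2⁻¹ * (A z * (starRingEnd ℂ) (B z)).re) volume :=
    (hB2.const_mul _).add (hABre.const_mul _)
  rw [integral_congr_ae (Filter.Eventually.of_forall hpt),
    integral_add (hA2.const_mul (1/4)) hsum2,
    integral_add (hB2.const_mul (1/4)) (hABre.const_mul 2⁻¹),
    integral_const_mul, integral_const_mul, integral_const_mul, hcross0]
  ring
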